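/- With notation as above (maximally entangled |Φ⟩ = (1/√l)Σ_λ |ψ_λ⟩|v_λ⟩, abelian multiplicity-free twirl 𝒢, Fourier measurement ℬ), the operators l·ℬ(|Φ⟩⟨Φ|) and l·𝒢(|Φ⟩⟨Φ|) are orthogonal projections, and the intersection of their ranges is the one-dimensional subspace spanned by |Φ⟩; consequently √(𝒢(|Φ⟩⟨Φ|)) · ℬ(|Φ⟩⟨Φ|) · √(𝒢(|Φ⟩⟨Φ|)) = (1/l²)|Φ⟩⟨Φ|. -/

import Mathlib

open scoped Matrix Kronecker ComplexOrder
open Matrix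

namespace DenseCoding

variable {n : Type*}

/-- Spectral functional calculus of a Hermitian matrix (0 on non-Hermitian input). -/
noncomputable def funCalc [Fintype n] [DecidableEq n] (f : ℝ → ℝ) (A : Matrix n n ℂ) :
    Matrix n n ℂ :=
  if hA : A.IsHermitian then
    (hA.eigenvectorUnitary : Matrix n n ℂ) *
      Matrix.diagonal (fun i => (f (hA.eigenvalues i) : ℂ)) *
      (star (hA.eigenvectorUnitary : Matrix n n ℂ))
  else 0

/-- Matrix logarithm (via the spectral decomposition). -/
noncomputable def mLog [Fintype n] [DecidableEq n] (A : Matrix n n ℂ) : Matrix n n ℂ :=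
  funCalc Real.log A

/-- Matrix square root (via the spectral decomposition). -/
noncomputable def mSqrt [Fintype n] [DecidableEq n] (A : Matrix n n ℂ) : Matrix n n ℂ :=
  funCalc Real.sqrt A

/-- Pseudo-inverse of the square root, taken on the support. -/
noncomputable def mPinvSqrt [Fintype n] [DecidableEq n] (A : Matrix n n ℂ) : Matrix n n ℂ :=
  funCalc (fun x => if x = 0 then 0 else 1 / Real.sqrt x) A

/-- von Neumann entropy H(A) = -Tr A log A, via eigenvalues. -/
noncomputable def vnEntropy [Fintype n] [DecidableEq n] (A : Matrix n n ℂ) : ℝ :=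
  if hA : A.IsHermitian then -∑ i, hA.eigenvalues i * Real.log (hA.eigenvalues i) else 0

/-- Quantum relative entropy D(ρ‖σ) = Tr ρ (log ρ - log σ). -/
noncomputable def relEntropy [Fintype n] [DecidableEq n] (ρ σ : Matrix n n ℂ) : ℝ :=
  ((ρ * (mLog ρ - mLog σ)).trace).re

/-- Density operator: positive semidefinite with unit trace. -/
def IsDensity [Fintype n] (ρ : Matrix n n ℂ) : Prop := ρ.PosSemidef ∧ ρ.trace = 1

/-- Projective unitary representation: each U g is unitary and
    U g * U g' = c(g,g') • U (g g') for unit complex numbers c(g,g'). -/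
def IsProjUnitaryRep {G : Type*} [Group G] [Fintype n] [DecidableEq n]
    (U : G → Matrix n n ℂ) : Prop :=
  (∀ g, U g ∈ Matrix.unitaryGroup n ℂ) ∧
    ∀ g g', ∃ c : ℂ, ‖c‖ = 1 ∧ U g * U g' = c • U (g * g')

/-- The group twirling channel 𝒢(ρ) = (1/|G|) Σ_g (U_g ⊗ I) ρ (U_g ⊗ I)†. -/
noncomputable def twirl {G a b : Type*} [Fintype G] [Fintype a] [Fintype b] [DecidableEq b]
    (U : G → Matrix a a ℂ) (ρ : Matrix (a × b) (a × b) ℂ) : Matrix (a × b) (a × b) ℂ :=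
  (Fintype.card G : ℂ)⁻¹ •
    ∑ g, (U g ⊗ₖ (1 : Matrix b b ℂ)) * ρ * (U g ⊗ₖ (1 : Matrix b b ℂ))ᴴ

/-- Rank-one outer product |x⟩⟨x|. -/
def outer {b : Type*} (x : b → ℂ) : Matrix b b ℂ := Matrix.vecMulVec x (star x)

/-- Measurement channel on B in the (orthonormal) family e:
    ℬ(ρ) = Σ_k (I ⊗ |e_k⟩⟨e_k|) ρ (I ⊗ |e_k⟩⟨e_k|). -/
noncomputable def meas {a b ι : Type*} [Fintype a] [Fintype b] [Fintype ι] [DecidableEq a]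
    (e : ι → b → ℂ) (ρ : Matrix (a × b) (a × b) ℂ) : Matrix (a × b) (a × b) ℂ :=
  ∑ k, ((1 : Matrix a a ℂ) ⊗ₖ outer (e k)) * ρ * ((1 : Matrix a a ℂ) ⊗ₖ outer (e k))

/-- A family of vectors is orthonormal. -/
def OrthoFam {ι b : Type*} [Fintype b] [DecidableEq ι] (e : ι → b → ℂ) : Prop :=
  ∀ k k', ∑ i, star (e k i) * e k' i = if k = k' then 1 else 0

/-- Completely positive trace-preserving map, via a Kraus representation. -/
def IsCPTP {n m : Type*} [Fintype n] [Fintype m] [DecidableEq n] [DecidableEq m] (Γ : Matrix n n ℂ → Matrix m m ℂ) : Prop :=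
  ∃ (N : ℕ) (K : Fin N → Matrix m n ℂ),
    (∀ ρ, Γ ρ = ∑ t, K t * ρ * (K t)ᴴ) ∧ (∑ t, (K t)ᴴ * K t = 1)

/-- Gram matrix J(V)_{λη} = ⟨v_λ|v_η⟩ of a family of vectors. -/
noncomputable def gram {l β : Type*} [Fintype β] (v : l → β → ℂ) : Matrix l l ℂ :=
  Matrix.of fun i j => ∑ k, v i k * star (v j k)

/-- The maximally coherent state projector |+⟩⟨+| on C^l. -/
noncomputable def plusMat (l : ℕ) : Matrix (Fin l) (Fin l) ℂ := Matrix.of fun _ _ => (l : ℂ)⁻¹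

/-- Incoherent (diagonal) unitary Z_k = Σ_λ e^{iθ_{λ,k}}|λ⟩⟨λ|. -/
noncomputable def diagPhase {l κ : Type*} [DecidableEq l] (θ : l → κ → ℝ) (k : κ) :
    Matrix l l ℂ :=
  Matrix.diagonal fun i => Complex.exp (Complex.I * θ i k)

/-- Shannon entropy of a distribution. -/
noncomputable def shannonEntropy {ι : Type*} [Fintype ι] (P : ι → ℝ) : ℝ :=
  -∑ i, P i * Real.log (P i)


/-- The phase e^{2πi x / l}. -/
noncomputable def phase (l : ℕ) (x : ℤ) : ℂ :=
  Complex.exp (((2 * Real.pi * x / l : ℝ) : ℂ) * Complex.I)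

/-!
Write `u_λ = ψ_λ ⊗ v_λ` and `w_k = φ_k ⊗ e_k`. Both families are orthonormal, and since the
Fourier matrix `F` is unitary, `√l Φ = ∑_λ u_λ = ∑_k w_k`. Each Kraus operator of `𝒢` (resp. `ℬ`)
maps `Φ` to `u_λ / √l` (resp. `w_k / √l`), so `l 𝒢(|Φ⟩⟨Φ|) = P` and `l ℬ(|Φ⟩⟨Φ|) = Q` are the
projections onto the spans of the two families. All overlaps `⟨w_k|u_λ⟩ = |F_{kλ}|²` equal `1/l`,
whence `Q P = |Φ⟩⟨Φ|`: a vector fixed by both projections is a multiple of `Φ`, and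
`√(P/l) (Q/l) √(P/l) = l⁻² P Q P = l⁻² |Φ⟩⟨Φ|`.
-/

section Outer

variable {γ : Type*}

lemma outer_conjTranspose (x : γ → ℂ) : (outer x)ᴴ = outer x := by
  simp [outer, conjTranspose_vecMulVec]

variable [Fintype γ]

lemma outer_mulVec (x y : γ → ℂ) : outer x *ᵥ y = (star x ⬝ᵥ y) • x := by
  simp [outer, vecMulVec_mulVec]

lemma outer_smul (c : ℂ) (x : γ → ℂ) : outer (c • x) = (c * star c) • outer x := by
  ext i j
  simp [outer, vecMulVec_apply]
  ring

lemma mul_outer_mul_conjTranspose {γ' : Type*} (K : Matrix γ' γ ℂ) (x : γ → ℂ) :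
    K * outer x * Kᴴ = outer (K *ᵥ x) := by
  rw [outer, outer, mul_vecMulVec, vecMulVec_mul, star_mulVec]

end Outer

def sumOuter {ι γ : Type*} [Fintype ι] (u : ι → γ → ℂ) : Matrix γ γ ℂ := ∑ s, outer (u s)

section SumOuter

variable {ι κ γ : Type*} [Fintype ι] [Fintype κ] [Fintype γ]

omit [Fintype γ] in
lemma sumOuter_isHermitian (u : ι → γ → ℂ) : (sumOuter u).IsHermitian := by
  simp [IsHermitian, sumOuter, conjTranspose_sum, outer_conjTranspose]

omit [Fintype ι] in
lemma OrthoFam.star_dotProduct [DecidableEq ι] {u : ι → γ → ℂ} (hu : OrthoFam u) (s t : ι) :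
    star (u s) ⬝ᵥ u t = if s = t then 1 else 0 :=
  hu s t

lemma OrthoFam.sumOuter_mulVec [DecidableEq ι] {u : ι → γ → ℂ} (hu : OrthoFam u) (t : ι) :
    sumOuter u *ᵥ u t = u t := by
  simp [sumOuter, sum_mulVec, outer_mulVec, hu.star_dotProduct]

lemma OrthoFam.sumOuter_mulVec_sum [DecidableEq ι] {u : ι → γ → ℂ} (hu : OrthoFam u) :
    sumOuter u *ᵥ ∑ t, u t = ∑ t, u t := by
  simp only [mulVec_sum, hu.sumOuter_mulVec]

lemma OrthoFam.sumOuter_mul_self [DecidableEq ι] {u : ι → γ → ℂ} (hu : OrthoFam u) :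
    sumOuter u * sumOuter u = sumOuter u := by
  calc sumOuter u * sumOuter u = ∑ t, sumOuter u * outer (u t) := Finset.mul_sum _ _ _
    _ = sumOuter u := Finset.sum_congr rfl fun t _ => by
      rw [outer, mul_vecMulVec, hu.sumOuter_mulVec]

lemma sumOuter_mul_sumOuter {u : ι → γ → ℂ} {w : κ → γ → ℂ} {c : ℂ}
    (h : ∀ s k, star (u s) ⬝ᵥ w k = c) :
    sumOuter u * sumOuter w = c • vecMulVec (∑ s, u s) (star (∑ k, w k)) := by
  ext i j
  simp [sumOuter, Finset.sum_mul, Finset.mul_sum, outer, vecMulVec_mul_vecMulVec, h,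
    vecMulVec_apply, Matrix.sum_apply]

lemma sum_mul_outer_mul_of_mulVec {K : ι → Matrix γ γ ℂ} (hK : ∀ s, (K s)ᴴ = K s)
    {x : γ → ℂ} {c : ℂ} {y : ι → γ → ℂ} (h : ∀ s, K s *ᵥ x = c • y s) :
    ∑ s, K s * outer x * K s = (c * star c) • sumOuter y := by
  simp_rw [sumOuter, Finset.smul_sum]
  refine Finset.sum_congr rfl fun s _ => ?_
  calc K s * outer x * K s = K s * outer x * (K s)ᴴ := by rw [hK]
    _ = _ := by rw [mul_outer_mul_conjTranspose, h, outer_smul]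

end SumOuter

lemma range_inf_range_eq_span {γ : Type*} [Fintype γ] [DecidableEq γ] {P Q : Matrix γ γ ℂ}
    {x : γ → ℂ} (hP : P * P = P) (hQ : Q * Q = Q) (hPQ : P * Q = outer x)
    (hPx : P *ᵥ x = x) (hQx : Q *ᵥ x = x) :
    LinearMap.range (toLin' P) ⊓ LinearMap.range (toLin' Q) = Submodule.span ℂ {x} := by
  apply le_antisymm
  · rintro z ⟨⟨z₁, hz₁⟩, ⟨z₂, hz₂⟩⟩
    rw [toLin'_apply] at hz₁ hz₂
    have hPz : P *ᵥ z = z := by rw [← hz₁, mulVec_mulVec, hP]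
    have hQz : Q *ᵥ z = z := by rw [← hz₂, mulVec_mulVec, hQ]
    refine Submodule.mem_span_singleton.mpr ⟨star x ⬝ᵥ z, ?_⟩
    rw [← outer_mulVec, ← hPQ, ← mulVec_mulVec, hQz, hPz]
  · rw [Submodule.span_le, Set.singleton_subset_iff]
    exact ⟨⟨x, hPx⟩, ⟨x, hQx⟩⟩

lemma cfc_smul_of_isIdempotentElem {A : Type*} [Ring A] [StarRing A] [Algebra ℝ A]
    [TopologicalSpace A] [T2Space A] [ContinuousFunctionalCalculus ℝ A IsSelfAdjoint] {P : A}
    (hP : IsSelfAdjoint P) (hPP : IsIdempotentElem P) {f : ℝ → ℝ} (hf : Continuous f)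
    (hf₀ : f 0 = 0) (r : ℝ) :
    cfc f (r • P) = f r • P := by
  rw [← cfc_comp_smul r f P, ← cfc_const_mul_id (f r) P]
  refine cfc_congr fun x hx => ?_
  rcases (isIdempotentElem_iff_spectrum_subset ℝ P hP).mp hPP hx with rfl | rfl <;>
    simp [hf₀]

lemma funCalc_eq_cfc {n : Type*} [Fintype n] [DecidableEq n] (f : ℝ → ℝ) (A : Matrix n n ℂ) :
    funCalc f A = cfc f A := by
  by_cases hA : A.IsHermitian
  · rw [funCalc, dif_pos hA, hA.cfc_eq, IsHermitian.cfc, Unitary.conjStarAlgAut_apply]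
    rfl
  · rw [funCalc, dif_neg hA, cfc_apply_of_not_predicate (p := IsSelfAdjoint) A hA]

lemma mSqrt_smul_of_isHermitian {n : Type*} [Fintype n] [DecidableEq n] {P : Matrix n n ℂ}
    (hP : P.IsHermitian) (hPP : P * P = P) (r : ℝ) :
    mSqrt ((r : ℂ) • P) = (√r : ℂ) • P := by
  have := cfc_smul_of_isIdempotentElem hP hPP Real.continuous_sqrt Real.sqrt_zero r
  rw [mSqrt, funCalc_eq_cfc]
  simpa [Complex.coe_smul] using this

def prodVec {α β : Type*} (x : α → ℂ) (y : β → ℂ) : α × β → ℂ := fun q => x q.1 * y q.2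

section ProdVec

variable {ι α β : Type*} [Fintype ι] [Fintype α] [Fintype β]

omit [Fintype ι] [Fintype α] [Fintype β] in
lemma star_prodVec (x : α → ℂ) (y : β → ℂ) : star (prodVec x y) = prodVec (star x) (star y) := by
  ext q
  simp [prodVec]

omit [Fintype ι] [Fintype α] [Fintype β] in
lemma smul_prodVec (c : ℂ) (x : α → ℂ) (y : β → ℂ) : prodVec (c • x) y = c • prodVec x y := by
  ext q
  simp [prodVec, mul_assoc]

omit [Fintype ι] [Fintype α] [Fintype β] in
lemma prodVec_smul (c : ℂ) (x : α → ℂ) (y : β → ℂ) : prodVec x (c • y) = c • prodVec x y := by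
  ext q
  simp [prodVec, mul_left_comm]

omit [Fintype ι] in
lemma prodVec_dotProduct_prodVec (x x' : α → ℂ) (y y' : β → ℂ) :
    prodVec x y ⬝ᵥ prodVec x' y' = (x ⬝ᵥ x') * (y ⬝ᵥ y') := by
  simp only [dotProduct, prodVec, Fintype.sum_prod_type, Finset.sum_mul_sum]
  exact Finset.sum_congr rfl fun _ _ => Finset.sum_congr rfl fun _ _ => by ring

omit [Fintype ι] in
lemma kronecker_mulVec_prodVec (A : Matrix α α ℂ) (B : Matrix β β ℂ) (x : α → ℂ) (y : β → ℂ) :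
    (A ⊗ₖ B) *ᵥ prodVec x y = prodVec (A *ᵥ x) (B *ᵥ y) := by
  ext q
  simp only [mulVec, dotProduct, prodVec, kroneckerMap_apply, Fintype.sum_prod_type,
    Finset.sum_mul_sum]
  exact Finset.sum_congr rfl fun _ _ => Finset.sum_congr rfl fun _ _ => by ring

omit [Fintype ι] in
lemma OrthoFam.prod [DecidableEq ι] {a : ι → α → ℂ} {b : ι → β → ℂ} (ha : OrthoFam a)
    (hb : OrthoFam b) : OrthoFam fun s => prodVec (a s) (b s) := by
  intro s t
  change star (prodVec (a s) (b s)) ⬝ᵥ prodVec (a t) (b t) = _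
  rw [star_prodVec, prodVec_dotProduct_prodVec, ha.star_dotProduct,
    hb.star_dotProduct]
  split_ifs <;> simp

lemma OrthoFam.outer_kronecker_one_mulVec [DecidableEq ι] [DecidableEq β] {a : ι → α → ℂ}
    (ha : OrthoFam a) (b : ι → β → ℂ) (s : ι) :
    (outer (a s) ⊗ₖ (1 : Matrix β β ℂ)) *ᵥ ∑ t, prodVec (a t) (b t) = prodVec (a s) (b s) := by
  simp only [mulVec_sum, kronecker_mulVec_prodVec, outer_mulVec, one_mulVec, ha.star_dotProduct,
    smul_prodVec]
  simp

lemma OrthoFam.one_kronecker_outer_mulVec [DecidableEq ι] [DecidableEq α] {b : ι → β → ℂ}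
    (hb : OrthoFam b) (a : ι → α → ℂ) (k : ι) :
    ((1 : Matrix α α ℂ) ⊗ₖ outer (b k)) *ᵥ ∑ t, prodVec (a t) (b t) = prodVec (a k) (b k) := by
  simp only [mulVec_sum, kronecker_mulVec_prodVec, outer_mulVec, one_mulVec, hb.star_dotProduct,
    prodVec_smul]
  simp

end ProdVec

section UnitaryChange

variable {ι κ α β γ : Type*} [Fintype ι] [Fintype κ] [Fintype γ] [DecidableEq ι]

omit [Fintype κ] in
lemma OrthoFam.star_dotProduct_sum_smul {v : ι → γ → ℂ} (hv : OrthoFam v) (c : ι → ℂ)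
    (t : ι) : star (v t) ⬝ᵥ ∑ s, c s • v s = c t := by
  simp [dotProduct_sum, dotProduct_smul, hv.star_dotProduct]

omit [Fintype κ] in
lemma OrthoFam.sum_smul [DecidableEq κ] {v : ι → γ → ℂ} (hv : OrthoFam v) {U : Matrix κ ι ℂ}
    (hU : U * Uᴴ = 1) : OrthoFam fun k => ∑ s, U k s • v s := by
  intro k k'
  change star (∑ s, U k s • v s) ⬝ᵥ ∑ s, U k' s • v s = _
  have hUkk' : ∑ s, U k' s * star (U k s) = if k = k' then 1 else 0 := by
    simpa [mul_apply, one_apply, eq_comm] using congrFun (congrFun hU k') k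
  simp only [star_sum, star_smul, sum_dotProduct, smul_dotProduct, hv.star_dotProduct_sum_smul,
    smul_eq_mul, ← hUkk']
  exact Finset.sum_congr rfl fun s _ => mul_comm _ _

omit [DecidableEq ι] in
lemma sum_prodVec_star_smul_sum_smul [DecidableEq ι] (U : Matrix κ ι ℂ) (hU : Uᴴ * U = 1)
    (a : ι → α → ℂ) (b : ι → β → ℂ) :
    ∑ k, prodVec (∑ s, star (U k s) • a s) (∑ t, U k t • b t) = ∑ s, prodVec (a s) (b s) := by
  ext q
  calc (∑ k, prodVec (∑ s, star (U k s) • a s) (∑ t, U k t • b t)) q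
      = ∑ s, ∑ t, (Uᴴ * U) s t * (a s q.1 * b t q.2) := by
        simp only [Finset.sum_apply, prodVec, Pi.smul_apply, smul_eq_mul, Finset.sum_mul_sum]
        simp only [mul_apply, conjTranspose_apply, Finset.sum_mul]
        rw [Finset.sum_comm]
        refine Finset.sum_congr rfl fun s _ => ?_
        rw [Finset.sum_comm]
        exact Finset.sum_congr rfl fun t _ => Finset.sum_congr rfl fun k _ => by ring
    _ = (∑ s, prodVec (a s) (b s)) q := by simp [hU, one_apply, prodVec, Finset.sum_apply]

end UnitaryChange

section Fourier

open Complex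

lemma phase_add (l : ℕ) (x y : ℤ) : phase l (x + y) = phase l x * phase l y := by
  rw [phase, phase, phase, ← exp_add]
  push_cast
  ring_nf

lemma star_phase (l : ℕ) (x : ℤ) : star (phase l x) = phase l (-x) := by
  rw [phase, phase, star_def, ← exp_conj]
  simp only [map_mul, conj_I, conj_ofReal]
  push_cast
  ring_nf

lemma phase_eq_zpow (l : ℕ) (x : ℤ) : phase l x = exp (2 * Real.pi * I / l) ^ x := by
  rw [← exp_int_mul, phase]
  push_cast
  ring_nf

lemma sum_phase_mul {l : ℕ} (hl : 0 < l) (m : ℤ) :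
    ∑ s : Fin l, phase l (m * (s + 1)) = if (l : ℤ) ∣ m then (l : ℂ) else 0 := by
  have hζ := isPrimitiveRoot_exp l hl.ne'
  set z := exp (2 * Real.pi * I / l) ^ m
  have hphase : ∀ s : Fin l, phase l (m * (s + 1)) = z ^ ((s : ℕ) + 1) := fun s => by
    rw [phase_eq_zpow, ← zpow_natCast, ← _root_.zpow_mul]
    push_cast
    rfl
  simp only [hphase]
  split_ifs with hm
  · simp [show z = 1 from (hζ.zpow_eq_one_iff_dvd m).mpr hm]
  · have hz : z ≠ 1 := fun h => hm ((hζ.zpow_eq_one_iff_dvd m).mp h)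
    have hzl : z ^ l = 1 := by
      rw [← zpow_natCast, ← _root_.zpow_mul, mul_comm m, _root_.zpow_mul, zpow_natCast,
        hζ.pow_eq_one, _root_.one_zpow]
    rw [Fin.sum_univ_eq_sum_range (fun s => z ^ (s + 1))]
    simp_rw [pow_succ']
    rw [← Finset.mul_sum, geom_sum_eq hz, hzl]
    simp

lemma ofReal_inv_sqrt_mul_star (l : ℕ) :
    ((√l : ℝ) : ℂ)⁻¹ * star ((√l : ℝ) : ℂ)⁻¹ = (l : ℂ)⁻¹ := by
  rw [← ofReal_inv, star_def, conj_ofReal, ← ofReal_mul, ← mul_inv,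
    Real.mul_self_sqrt (Nat.cast_nonneg l)]
  push_cast
  rfl

noncomputable def fourierMat (l : ℕ) : Matrix (Fin l) (Fin l) ℂ :=
  of fun k s => ((√l : ℝ) : ℂ)⁻¹ * phase l (((k : ℕ) + 1 : ℤ) * ((s : ℕ) + 1 : ℤ))

variable {l : ℕ}

lemma fourierMat_comm (k s : Fin l) : fourierMat l k s = fourierMat l s k := by
  simp only [fourierMat, of_apply, mul_comm ((k : ℕ) + 1 : ℤ)]

lemma star_fourierMat_mul_self (k s : Fin l) :
    star (fourierMat l k s) * fourierMat l k s = (l : ℂ)⁻¹ := by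
  rw [← ofReal_inv_sqrt_mul_star l]
  simp only [fourierMat, of_apply, star_mul', star_phase]
  rw [mul_mul_mul_comm, ← phase_add, neg_add_cancel, mul_comm]
  simp [phase]

lemma fourierMat_mul_conjTranspose (hl : 0 < l) : fourierMat l * (fourierMat l)ᴴ = 1 := by
  ext k k'
  have hsum : (fourierMat l * (fourierMat l)ᴴ) k k' =
      (l : ℂ)⁻¹ * ∑ s : Fin l, phase l (((k : ℕ) - (k' : ℕ) : ℤ) * ((s : ℕ) + 1 : ℤ)) := by
    rw [mul_apply, Finset.mul_sum]
    refine Finset.sum_congr rfl fun s _ => ?_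
    simp only [conjTranspose_apply, fourierMat, of_apply, star_mul', star_phase,
      ← ofReal_inv_sqrt_mul_star l]
    rw [mul_mul_mul_comm, ← phase_add]
    ring_nf
  rw [hsum, sum_phase_mul hl, one_apply]
  have hl' : (l : ℂ) ≠ 0 := Nat.cast_ne_zero.mpr hl.ne'
  split_ifs with hdvd hkk
  · field_simp
  · refine absurd (Fin.ext ?_) hkk
    have := Int.eq_zero_of_abs_lt_dvd hdvd (by rw [abs_lt]; omega)
    omega
  · simp_all
  · simp

lemma conjTranspose_fourierMat_mul (hl : 0 < l) : (fourierMat l)ᴴ * fourierMat l = 1 :=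
  mul_eq_one_comm.mp (fourierMat_mul_conjTranspose hl)

end Fourier

section Channels

variable {ι α β : Type*} [Fintype ι] [Fintype α] [Fintype β] [DecidableEq ι]

lemma OrthoFam.sum_outer_kronecker_one_conj [DecidableEq β] {a : ι → α → ℂ} (ha : OrthoFam a)
    (b : ι → β → ℂ) (c : ℂ) :
    ∑ s, (outer (a s) ⊗ₖ (1 : Matrix β β ℂ)) * outer (c • ∑ t, prodVec (a t) (b t)) *
        (outer (a s) ⊗ₖ (1 : Matrix β β ℂ)) =
      (c * star c) • sumOuter fun s => prodVec (a s) (b s) := by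
  refine sum_mul_outer_mul_of_mulVec (fun s => ?_) (fun s => ?_)
  · rw [conjTranspose_kronecker, outer_conjTranspose, conjTranspose_one]
  · rw [mulVec_smul, ha.outer_kronecker_one_mulVec]

lemma OrthoFam.meas_outer_smul_sum_prodVec [DecidableEq α] {b : ι → β → ℂ} (hb : OrthoFam b)
    (a : ι → α → ℂ) (c : ℂ) :
    meas b (outer (c • ∑ t, prodVec (a t) (b t))) =
      (c * star c) • sumOuter fun t => prodVec (a t) (b t) := by
  refine sum_mul_outer_mul_of_mulVec (fun k => ?_) (fun k => ?_)
  · rw [conjTranspose_kronecker, outer_conjTranspose, conjTranspose_one]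
  · rw [mulVec_smul, hb.one_kronecker_outer_mulVec]

end Channels

lemma mSqrt_smul_mul_smul_mul_mSqrt {n : Type*} [Fintype n] [DecidableEq n]
    {P Q : Matrix n n ℂ} {x : n → ℂ} (hP : P.IsHermitian) (hPP : P * P = P)
    (hQP : Q * P = outer x) (hPx : P *ᵥ x = x) {r : ℝ} (hr : 0 ≤ r) :
    mSqrt ((r : ℂ) • P) * ((r : ℂ) • Q) * mSqrt ((r : ℂ) • P) = (r : ℂ) ^ 2 • outer x := by
  have hsqrt : (√r : ℂ) * r * √r = (r : ℂ) ^ 2 := by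
    rw [mul_right_comm, ← Complex.ofReal_mul, Real.mul_self_sqrt hr, sq]
  rw [mSqrt_smul_of_isHermitian hP hPP, smul_mul_smul, smul_mul_smul, mul_assoc P, hQP, outer,
    mul_vecMulVec, hPx, hsqrt]

section MaxEnt

variable {α β : Type*} [Fintype α] [Fintype β] {l : ℕ}

/-- `φ_k ⊗ e_k` in the notation of the statement. -/
noncomputable def fourierPair (ψ : Fin l → α → ℂ) (v : Fin l → β → ℂ) (k : Fin l) : α × β → ℂ :=
  prodVec (∑ s, star (fourierMat l k s) • ψ s) (∑ s, fourierMat l k s • v s)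

lemma orthoFam_fourierPair (hl : 0 < l) {ψ : Fin l → α → ℂ} {v : Fin l → β → ℂ}
    (hψ : OrthoFam ψ) (hv : OrthoFam v) : OrthoFam (fourierPair ψ v) := by
  have hφ : (fun k => ∑ s, star (fourierMat l k s) • ψ s) =
      fun k => ∑ s, (fourierMat l)ᴴ k s • ψ s := by
    simp only [conjTranspose_apply, fourierMat_comm]
  refine OrthoFam.prod (hφ ▸ hψ.sum_smul ?_) (hv.sum_smul (fourierMat_mul_conjTranspose hl))
  rw [conjTranspose_conjTranspose, conjTranspose_fourierMat_mul hl]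

omit [Fintype α] [Fintype β] in
lemma sum_fourierPair (hl : 0 < l) (ψ : Fin l → α → ℂ) (v : Fin l → β → ℂ) :
    ∑ k, fourierPair ψ v k = ∑ s, prodVec (ψ s) (v s) :=
  sum_prodVec_star_smul_sum_smul _ (conjTranspose_fourierMat_mul hl) ψ v

lemma star_fourierPair_dotProduct {ψ : Fin l → α → ℂ} {v : Fin l → β → ℂ} (hψ : OrthoFam ψ)
    (hv : OrthoFam v) (k s : Fin l) :
    star (fourierPair ψ v k) ⬝ᵥ prodVec (ψ s) (v s) = (l : ℂ)⁻¹ := by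
  rw [star_dotProduct, fourierPair, star_prodVec, prodVec_dotProduct_prodVec,
    hψ.star_dotProduct_sum_smul, hv.star_dotProduct_sum_smul, star_fourierMat_mul_self]
  simp

lemma sumOuter_fourierPair_mul (hl : 0 < l) {ψ : Fin l → α → ℂ} {v : Fin l → β → ℂ}
    (hψ : OrthoFam ψ) (hv : OrthoFam v) :
    sumOuter (fourierPair ψ v) * sumOuter (fun s => prodVec (ψ s) (v s)) =
      outer (((√l : ℝ) : ℂ)⁻¹ • ∑ s, prodVec (ψ s) (v s)) := by
  rw [sumOuter_mul_sumOuter (star_fourierPair_dotProduct hψ hv), outer, sum_fourierPair hl,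
    star_smul, smul_vecMulVec, vecMulVec_smul, smul_smul, ofReal_inv_sqrt_mul_star]

variable [DecidableEq α]

lemma meas_outer_maxEnt (hl : 0 < l) (ψ : Fin l → α → ℂ) {v : Fin l → β → ℂ}
    (hv : OrthoFam v) :
    meas (fun k => ∑ s, fourierMat l k s • v s)
        (outer (((√l : ℝ) : ℂ)⁻¹ • ∑ s, prodVec (ψ s) (v s))) =
      (l : ℂ)⁻¹ • sumOuter (fourierPair ψ v) := by
  rw [← sum_fourierPair hl, ← ofReal_inv_sqrt_mul_star]
  exact (hv.sum_smul (fourierMat_mul_conjTranspose hl)).meas_outer_smul_sum_prodVec _ _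

end MaxEnt

/-- l·ℬ(|Φ⟩⟨Φ|) and l·𝒢(|Φ⟩⟨Φ|) are orthogonal projections whose ranges
intersect exactly in ℂ|Φ⟩, and √(𝒢(|Φ⟩⟨Φ|))·ℬ(|Φ⟩⟨Φ|)·√(𝒢(|Φ⟩⟨Φ|)) = (1/l²)|Φ⟩⟨Φ|. -/
theorem proj_intersection_maxEnt
    {α β : Type*} [Fintype α] [DecidableEq α] [Fintype β] [DecidableEq β]
    {l : ℕ} (hl : 0 < l)
    (ψ : Fin l → α → ℂ) (hψ : OrthoFam ψ)
    (v : Fin l → β → ℂ) (hv : OrthoFam v)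
    (e : Fin l → β → ℂ)
    (he : ∀ k, e k = fun j =>
      (↑(Real.sqrt l) : ℂ)⁻¹ * ∑ s : Fin l, phase l (((k.val : ℤ) + 1) * ((s.val : ℤ) + 1)) * v s j)
    (Φ : α × β → ℂ)
    (hΦ : Φ = fun q => (↑(Real.sqrt l) : ℂ)⁻¹ * ∑ s, ψ s q.1 * v s q.2)
    (𝒢 : Matrix (α × β) (α × β) ℂ → Matrix (α × β) (α × β) ℂ)
    (h𝒢 : ∀ ρ, 𝒢 ρ = ∑ s, (outer (ψ s) ⊗ₖ (1 : Matrix β β ℂ)) * ρ *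
        (outer (ψ s) ⊗ₖ (1 : Matrix β β ℂ))) :
    ((l : ℂ) • meas e (outer Φ)).IsHermitian ∧
    ((l : ℂ) • meas e (outer Φ)) * ((l : ℂ) • meas e (outer Φ)) = (l : ℂ) • meas e (outer Φ) ∧
    ((l : ℂ) • 𝒢 (outer Φ)).IsHermitian ∧
    ((l : ℂ) • 𝒢 (outer Φ)) * ((l : ℂ) • 𝒢 (outer Φ)) = (l : ℂ) • 𝒢 (outer Φ) ∧
    (LinearMap.range (Matrix.toLin' ((l : ℂ) • meas e (outer Φ))) ⊓
        LinearMap.range (Matrix.toLin' ((l : ℂ) • 𝒢 (outer Φ))) =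
      Submodule.span ℂ {Φ}) ∧
    mSqrt (𝒢 (outer Φ)) * meas e (outer Φ) * mSqrt (𝒢 (outer Φ)) =
      ((l : ℂ) ^ 2)⁻¹ • outer Φ := by
  have he' : e = fun k => ∑ s, fourierMat l k s • v s := by
    funext k j
    simp [he, fourierMat, Finset.sum_apply, Finset.mul_sum, mul_assoc]
  have hΦ' : Φ = ((√l : ℝ) : ℂ)⁻¹ • ∑ s, prodVec (ψ s) (v s) := by
    funext q
    simp [hΦ, prodVec, Finset.sum_apply]
  have hu := hψ.prod hv
  have hw := orthoFam_fourierPair hl hψ hv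
  have hB : meas e (outer Φ) = (l : ℂ)⁻¹ • sumOuter (fourierPair ψ v) := by
    rw [he', hΦ', meas_outer_maxEnt hl ψ hv]
  have hG : 𝒢 (outer Φ) = (l : ℂ)⁻¹ • sumOuter fun s => prodVec (ψ s) (v s) := by
    rw [h𝒢, hΦ', hψ.sum_outer_kronecker_one_conj, ofReal_inv_sqrt_mul_star]
  have hwu := hΦ' ▸ sumOuter_fourierPair_mul hl hψ hv
  have huΦ : (sumOuter fun s => prodVec (ψ s) (v s)) *ᵥ Φ = Φ := by
    rw [hΦ', mulVec_smul, hu.sumOuter_mulVec_sum]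
  have hwΦ : sumOuter (fourierPair ψ v) *ᵥ Φ = Φ := by
    rw [hΦ', mulVec_smul, ← sum_fourierPair hl, hw.sumOuter_mulVec_sum]
  have hl' : (l : ℂ) ≠ 0 := Nat.cast_ne_zero.mpr hl.ne'
  rw [hB, hG, smul_inv_smul₀ hl', smul_inv_smul₀ hl']
  refine ⟨sumOuter_isHermitian _, hw.sumOuter_mul_self, sumOuter_isHermitian _,
    hu.sumOuter_mul_self, range_inf_range_eq_span hw.sumOuter_mul_self hu.sumOuter_mul_self hwu
      hwΦ huΦ, ?_⟩
  simpa using mSqrt_smul_mul_smul_mul_mSqrt (sumOuter_isHermitian _) hu.sumOuter_mul_self hwu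
    huΦ (r := (l : ℝ)⁻¹) (by positivity)

end DenseCoding
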